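/- Let P_k be geometric Littlewood–Paley projections on a compact 2-dimensional Riemannian manifold associated to m ∈ M. Then for every smooth tensorfield F: ∑_k ‖P_k F‖_{L²}² ≲ ‖F‖_{L²}² (Bessel inequality). -/

import Mathlib

open MeasureTheory
open Set
open scoped RealInnerProductSpace

lemma measurable_indicator_of_continuousOn {f : ℝ → ℝ} {s : Set ℝ}
    (hs : IsOpen s) (hf : ContinuousOn f s) : Measurable (s.indicator f) := by
  apply measurable_of_isOpen
  intro t ht
  by_cases h0 : (0:ℝ) ∈ t
  · have h : s.indicator f ⁻¹' t = (s ∩ f ⁻¹' t) ∪ sᶜ := by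
      ext x
      by_cases hx : x ∈ s <;> simp [Set.indicator, hx, h0]
    rw [h]
    exact ((hf.isOpen_inter_preimage hs ht).measurableSet).union hs.measurableSet.compl
  · have h : s.indicator f ⁻¹' t = s ∩ f ⁻¹' t := by
      ext x
      by_cases hx : x ∈ s <;> simp [Set.indicator, hx, h0]
    rw [h]
    exact (hf.isOpen_inter_preimage hs ht).measurableSet

lemma sum_geom_of_inj {r : ℝ} (h0 : 0 ≤ r) (h1 : r < 1) (s : Finset ℤ) (e : ℤ → ℕ)
    (he : ∀ k ∈ s, ∀ l ∈ s, e k = e l → k = l) :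
    ∑ k ∈ s, r ^ e k ≤ (1 - r)⁻¹ := by
  calc ∑ k ∈ s, r ^ e k = ∑ j ∈ s.image e, r ^ j := (Finset.sum_image he).symm
    _ ≤ ∑' j : ℕ, r ^ j := Summable.sum_le_tsum _ (fun j _ => pow_nonneg h0 j)
        (summable_geometric_of_lt_one h0 h1)
    _ = (1 - r)⁻¹ := tsum_geometric_of_lt_one h0 h1

lemma sum_min_le_three (s : Finset ℤ) (a : ℝ) (ha : 0 ≤ a) :
    ∑ k ∈ s, min (((4:ℝ) ^ k * a) ^ 2) (((4:ℝ) ^ k * a)⁻¹) ≤ 3 := by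
  rcases ha.eq_or_lt with h | h
  · simp [← h]
  obtain ⟨n, hn1, hn2⟩ := exists_mem_Ioc_zpow (x := a) (y := (4:ℝ)) h (by norm_num)
  set N : ℤ := -(n + 1) with hNdef
  have h4 : ∀ j : ℤ, (0:ℝ) < 4 ^ j := fun j => zpow_pos (by norm_num) j
  have h4ne : (4:ℝ) ≠ 0 := by norm_num
  have hNa : (4:ℝ) ^ N * a ≤ 1 := by
    have := mul_le_mul_of_nonneg_left hn2 (h4 N).le
    calc (4:ℝ) ^ N * a ≤ 4 ^ N * 4 ^ (n + 1) := this
      _ = 1 := by rw [← zpow_add₀ h4ne, show N + (n+1) = 0 by omega, zpow_zero]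
  have hNa' : (1:ℝ) < 4 ^ (N + 1) * a := by
    have h5 := mul_lt_mul_of_pos_left hn1 (h4 (N + 1))
    have h6 : (1:ℝ) = 4 ^ (N + 1) * 4 ^ n := by
      rw [← zpow_add₀ h4ne, show N + 1 + n = 0 by omega, zpow_zero]
    linarith
  rw [← Finset.sum_filter_add_sum_filter_not s (fun k => k ≤ N)]
  have hb1 : ∑ k ∈ s.filter (fun k => k ≤ N), min (((4:ℝ) ^ k * a) ^ 2) (((4:ℝ) ^ k * a)⁻¹)
      ≤ (1 - (1:ℝ)/16)⁻¹ := by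
    refine le_trans (Finset.sum_le_sum (fun k hk => ?_))
      (sum_geom_of_inj (r := (1:ℝ)/16) (by norm_num) (by norm_num) _
        (fun k => (N - k).toNat) (fun k hk l hl hekl => ?_))
    · have hkN : k ≤ N := by
        have := Finset.mem_filter.1 hk; exact this.2
      refine (min_le_left _ _).trans ?_
      have hsplit : (4:ℝ) ^ k * a = 4 ^ (k - N) * (4 ^ N * a) := by
        rw [← mul_assoc, ← zpow_add₀ h4ne]; ring_nf
      have h1 : (4:ℝ) ^ k * a ≤ 4 ^ (k - N) := by
        rw [hsplit]
        calc (4:ℝ) ^ (k - N) * (4 ^ N * a) ≤ 4 ^ (k - N) * 1 :=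
          mul_le_mul_of_nonneg_left hNa (h4 _).le
          _ = _ := mul_one _
      have h2 : ((4:ℝ) ^ k * a) ^ 2 ≤ ((4:ℝ) ^ (k - N)) ^ 2 := by
        have hnn : (0:ℝ) ≤ 4 ^ k * a := by positivity
        exact pow_le_pow_left₀ hnn h1 2
      refine h2.trans (le_of_eq ?_)
      have hj : ((N - k).toNat : ℤ) = N - k := Int.toNat_of_nonneg (by omega)
      have hkN' : k - N = -(((N - k).toNat : ℤ)) := by omega
      rw [hkN', zpow_neg, zpow_natCast, ← inv_pow, ← pow_mul, pow_mul']
      norm_num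
    · have hk' := (Finset.mem_filter.1 hk).2
      have hl' := (Finset.mem_filter.1 hl).2
      have hekl' : (N - k).toNat = (N - l).toNat := hekl
      omega
  have hb2 : ∑ k ∈ s.filter (fun k => ¬ k ≤ N), min (((4:ℝ) ^ k * a) ^ 2) (((4:ℝ) ^ k * a)⁻¹)
      ≤ (1 - (1:ℝ)/4)⁻¹ := by
    refine le_trans (Finset.sum_le_sum (fun k hk => ?_))
      (sum_geom_of_inj (r := (1:ℝ)/4) (by norm_num) (by norm_num) _
        (fun k => (k - (N + 1)).toNat) (fun k hk l hl hekl => ?_))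
    · have hkN : N + 1 ≤ k := by
        have := (Finset.mem_filter.1 hk).2; omega
      refine (min_le_right _ _).trans ?_
      have hsplit : (4:ℝ) ^ k * a = 4 ^ (k - (N + 1)) * (4 ^ (N + 1) * a) := by
        rw [← mul_assoc, ← zpow_add₀ h4ne]; ring_nf
      have h1 : (4:ℝ) ^ (k - (N + 1)) ≤ 4 ^ k * a := by
        rw [hsplit]
        calc (4:ℝ) ^ (k - (N + 1)) = 4 ^ (k - (N + 1)) * 1 := (mul_one _).symm
          _ ≤ 4 ^ (k - (N + 1)) * (4 ^ (N + 1) * a) :=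
            mul_le_mul_of_nonneg_left hNa'.le (h4 _).le
      have h2 : ((4:ℝ) ^ k * a)⁻¹ ≤ ((4:ℝ) ^ (k - (N + 1)))⁻¹ :=
        inv_anti₀ (h4 _) h1
      refine h2.trans (le_of_eq ?_)
      have hj : ((k - (N + 1)).toNat : ℤ) = k - (N + 1) := Int.toNat_of_nonneg (by omega)
      rw [show k - (N+1) = (((k - (N + 1)).toNat : ℤ)) from hj.symm, zpow_natCast,
        ← inv_pow]
      norm_num
      omega
    · have hk' := (Finset.mem_filter.1 hk).2
      have hl' := (Finset.mem_filter.1 hl).2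
      have hekl' : (k - (N + 1)).toNat = (l - (N + 1)).toNat := hekl
      omega
  have := add_le_add hb1 hb2
  refine this.trans (by norm_num)

/-- The class `M` of Littlewood–Paley symbols: smooth functions on `[0,∞)` decaying
rapidly at infinity together with all derivatives, with vanishing moments
`∫₀^∞ τ^{k₁} ∂^{k₂} m = 0` for `k₁ + k₂ ≤ N`. -/
def IsLPSymbol (N : ℕ) (m : ℝ → ℝ) : Prop :=
  ContDiff ℝ (⊤ : ℕ∞) m ∧
  (∀ n k : ℕ, ∃ C : ℝ, ∀ τ : ℝ, 0 ≤ τ → τ ^ n * |iteratedDeriv k m τ| ≤ C) ∧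
  (∀ k₁ k₂ : ℕ, k₁ + k₂ ≤ N →
    ∫ τ in Set.Ioi (0:ℝ), τ ^ k₁ * iteratedDeriv k₂ m τ = 0)

/-- **Bessel inequality.** Let `P_k F = ∫₀^∞ 2^{2k} m(2^{2k}τ) U(τ)F dτ`
be the geometric Littlewood–Paley projections associated to a symbol `m ∈ M`, where
`U(τ)` is the selfadjoint contraction heat semigroup (with generator `Δ`) on the `L²`
space `H` of tensorfields of a compact 2-dimensional Riemannian manifold.  Then
`∑_k ‖P_k F‖² ≲ ‖F‖²`. -/
theorem lp_bessel_inequality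
    {H : Type*} [NormedAddCommGroup H] [InnerProductSpace ℝ H] [CompleteSpace H]
    (N : ℕ) (m : ℝ → ℝ) (hm : IsLPSymbol N m)
    (Δ : H →ₗ[ℝ] H) (U : ℝ → H →ₗ[ℝ] H)
    (hU0 : U 0 = LinearMap.id)
    (hsemi : ∀ s t : ℝ, 0 ≤ s → 0 ≤ t → ∀ F, U (s + t) F = U s (U t F))
    (hcontr : ∀ τ : ℝ, 0 ≤ τ → ∀ F : H, ‖U τ F‖ ≤ ‖F‖)
    (hselfadj : ∀ τ : ℝ, 0 ≤ τ → ∀ F G : H, ⟪U τ F, G⟫ = ⟪F, U τ G⟫)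
    (hheat : ∀ (F : H) (τ : ℝ), 0 < τ →
      HasDerivAt (fun σ : ℝ => U σ F) (Δ (U τ F)) τ) :
    ∃ C : ℝ, 0 < C ∧ ∀ F : H,
      (∑' k : ℤ,
        ‖∫ τ in Set.Ioi (0:ℝ), ((2:ℝ) ^ (2 * k) * m ((2:ℝ) ^ (2 * k) * τ)) • U τ F‖ ^ 2)
        ≤ C * ‖F‖ ^ 2 := by
  classical
  obtain ⟨hm_smooth, hm_decay, hm_mom⟩ := hm
  have hmc : Continuous m := hm_smooth.continuous
  obtain ⟨C₀, hC₀'⟩ := hm_decay 0 0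
  obtain ⟨C₂, hC₂'⟩ := hm_decay 2 0
  have hC₀ : ∀ τ : ℝ, 0 ≤ τ → |m τ| ≤ C₀ := by
    intro τ hτ; have := hC₀' τ hτ; simpa [iteratedDeriv_zero] using this
  have hC₂ : ∀ τ : ℝ, 0 ≤ τ → τ ^ 2 * |m τ| ≤ C₂ := by
    intro τ hτ; have := hC₂' τ hτ; simpa [iteratedDeriv_zero] using this
  have hC₀0 : 0 ≤ C₀ := le_trans (abs_nonneg _) (hC₀ 0 le_rfl)
  have hC₂0 : 0 ≤ C₂ := le_trans (by positivity) (hC₂ 1 zero_le_one)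
  have hrpow : ∀ s : ℝ, 0 < s → s ^ (-2:ℝ) = (s ^ 2)⁻¹ := by
    intro s hs
    rw [show (-2:ℝ) = -((2:ℕ):ℝ) by norm_num, Real.rpow_neg hs.le, Real.rpow_natCast]
  have hmbd : ∀ s : ℝ, 0 < s → |m s| ≤ C₂ * s ^ (-2:ℝ) := by
    intro s hs
    have h := hC₂ s hs.le
    have hs2 : (0:ℝ) < s ^ 2 := by positivity
    rw [hrpow s hs]
    calc |m s| = (s ^ 2 * |m s|) / s ^ 2 := by field_simp
      _ ≤ C₂ / s ^ 2 := by gcongr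
      _ = C₂ * (s ^ 2)⁻¹ := div_eq_mul_inv _ _
  -- integrability of m on (0,∞)
  have hm_int : IntegrableOn m (Ioi (0:ℝ)) := by
    have h1 : IntegrableOn m (Ioc (0:ℝ) 1) := hmc.integrableOn_Ioc
    have h2 : IntegrableOn m (Ioi (1:ℝ)) := by
      have hi : IntegrableOn (fun s : ℝ => C₂ * s ^ (-2:ℝ)) (Ioi (1:ℝ)) :=
        (integrableOn_Ioi_rpow_of_lt (by norm_num) one_pos).const_mul C₂
      refine Integrable.mono' hi hmc.aestronglyMeasurable.restrict ?_
      filter_upwards [ae_restrict_mem measurableSet_Ioi] with s hs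
      have hs0 : (0:ℝ) < s := lt_trans one_pos hs
      rw [Real.norm_eq_abs]
      exact hmbd s hs0
    have h3 := h1.union h2
    rwa [Ioc_union_Ioi_eq_Ioi zero_le_one] at h3
  have hm_abs_int : IntegrableOn (fun τ => |m τ|) (Ioi (0:ℝ)) := hm_int.abs
  set A : ℝ := ∫ τ in Ioi (0:ℝ), |m τ| with hAdef
  have hA0 : 0 ≤ A := setIntegral_nonneg measurableSet_Ioi (fun τ _ => abs_nonneg _)
  have hm_zero : ∫ τ in Ioi (0:ℝ), m τ = 0 := by
    have := hm_mom 0 0 (Nat.zero_le N)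
    simpa [iteratedDeriv_zero] using this
  -- tail bound
  have hm_tail : ∀ y : ℝ, 0 < y → ∫ s in Ioi y, |m s| ≤ C₂ / y := by
    intro y hy
    have hi : IntegrableOn (fun s : ℝ => C₂ * s ^ (-2:ℝ)) (Ioi y) :=
      (integrableOn_Ioi_rpow_of_lt (by norm_num) hy).const_mul C₂
    have hmono : ∫ s in Ioi y, |m s| ≤ ∫ s in Ioi y, C₂ * s ^ (-2:ℝ) := by
      refine integral_mono_ae (hm_abs_int.mono_set (Ioi_subset_Ioi hy.le)) hi ?_
      filter_upwards [ae_restrict_mem measurableSet_Ioi] with s hs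
      exact hmbd s (lt_trans hy hs)
    have hval : ∫ s in Ioi y, C₂ * s ^ (-2:ℝ) = C₂ / y := by
      rw [integral_const_mul, integral_Ioi_rpow_of_lt (by norm_num) hy]
      rw [show (-2:ℝ) + 1 = -1 by norm_num, Real.rpow_neg_one]
      field_simp
    linarith
  set K : ℝ := C₀ ^ 2 + 8 * A * C₂ + 1 with hKdef
  have hK0 : (0:ℝ) < K := by positivity
  have hKC₀ : C₀ ^ 2 ≤ K := by nlinarith [mul_nonneg (mul_nonneg (by norm_num : (0:ℝ) ≤ 8) hA0) hC₂0]
  have hKAC : 8 * A * C₂ ≤ K := by nlinarith [sq_nonneg C₀]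
  refine ⟨3 * K, by positivity, ?_⟩
  intro F
  set B : ℝ := ‖F‖ ^ 2 with hBdef
  have hB0 : 0 ≤ B := by positivity
  -- scaled symbols
  set c : ℤ → ℝ := fun k => (2:ℝ) ^ (2 * k) with hcdef
  have hc_pos : ∀ k, 0 < c k := fun k => zpow_pos (by norm_num) _
  have hc4 : ∀ k : ℤ, c k = (4:ℝ) ^ k := by
    intro k; rw [hcdef]; show (2:ℝ) ^ (2 * k) = 4 ^ k
    rw [zpow_mul]; norm_num
  set φ : ℤ → ℝ → ℝ := fun k τ => c k * m (c k * τ) with hφdef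
  have hφ_cont : ∀ k, Continuous (φ k) := fun k =>
    (continuous_const.mul (hmc.comp (continuous_const.mul continuous_id)))
  have hφ_int : ∀ k, IntegrableOn (φ k) (Ioi (0:ℝ)) := by
    intro k
    have h := (integrableOn_Ioi_comp_mul_left_iff m 0 (hc_pos k)).2
      (by rw [mul_zero]; exact hm_int)
    exact h.const_mul _
  have hφ_abs : ∀ k τ, |φ k τ| = c k * |m (c k * τ)| := fun k τ => by
    rw [hφdef]; show |c k * m (c k * τ)| = _
    rw [abs_mul, abs_of_pos (hc_pos k)]
  have hφ_absint : ∀ k, IntegrableOn (fun τ => |φ k τ|) (Ioi (0:ℝ)) := fun k => (hφ_int k).abs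
  have hφ_zero : ∀ k, ∫ τ in Ioi (0:ℝ), φ k τ = 0 := by
    intro k
    have h := integral_comp_mul_left_Ioi m 0 (hc_pos k)
    rw [mul_zero] at h
    calc ∫ τ in Ioi (0:ℝ), φ k τ = c k * ∫ τ in Ioi (0:ℝ), m (c k * τ) :=
        integral_const_mul _ _
      _ = c k * ((c k)⁻¹ • ∫ x in Ioi (0:ℝ), m x) := by rw [h]
      _ = 0 := by rw [hm_zero]; simp
  have hφ_A : ∀ k, ∫ τ in Ioi (0:ℝ), |φ k τ| = A := by
    intro k
    have h := integral_comp_mul_left_Ioi (fun x => |m x|) 0 (hc_pos k)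
    rw [mul_zero] at h
    calc ∫ τ in Ioi (0:ℝ), |φ k τ| = c k * ∫ τ in Ioi (0:ℝ), |m (c k * τ)| := by
            simp_rw [hφ_abs]; exact integral_const_mul _ _
      _ = c k * ((c k)⁻¹ • ∫ x in Ioi (0:ℝ), |m x|) := by rw [h]
      _ = A := by rw [← hAdef, smul_eq_mul, ← mul_assoc, mul_inv_cancel₀ (hc_pos k).ne', one_mul]
  have hφ_tail : ∀ (k : ℤ) (y : ℝ), 0 < y → ∫ τ in Ioi y, |φ k τ| ≤ C₂ / (c k * y) := by
    intro k y hy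
    have h := integral_comp_mul_left_Ioi (fun x => |m x|) y (hc_pos k)
    calc ∫ τ in Ioi y, |φ k τ| = c k * ∫ τ in Ioi y, |m (c k * τ)| := by
            simp_rw [hφ_abs]; exact integral_const_mul _ _
      _ = c k * ((c k)⁻¹ • ∫ x in Ioi (c k * y), |m x|) := by rw [h]
      _ = ∫ x in Ioi (c k * y), |m x| := by
        rw [smul_eq_mul, ← mul_assoc, mul_inv_cancel₀ (hc_pos k).ne', one_mul]
      _ ≤ C₂ / (c k * y) := hm_tail _ (by positivity)
  have hφ_bdd : ∀ (k : ℤ) (τ : ℝ), 0 ≤ τ → |φ k τ| ≤ c k * C₀ := by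
    intro k τ hτ
    rw [hφ_abs]
    exact mul_le_mul_of_nonneg_left (hC₀ _ (by positivity)) (hc_pos k).le
  -- the function g
  set g : ℝ → ℝ := fun s => ⟪U s F, F⟫ with hgdef
  have hg_half : ∀ s : ℝ, 0 ≤ s → g s = ‖U (s / 2) F‖ ^ 2 := by
    intro s hs
    have h2 : (0:ℝ) ≤ s / 2 := by linarith
    have hU2 : U s F = U (s / 2) (U (s / 2) F) := by
      conv_lhs => rw [show s = s / 2 + s / 2 by ring]
      exact hsemi _ _ h2 h2 F
    show ⟪U s F, F⟫ = _
    rw [hU2, hselfadj (s / 2) h2, real_inner_self_eq_norm_sq]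
  have hg_nonneg : ∀ s : ℝ, 0 ≤ s → 0 ≤ g s := by
    intro s hs; rw [hg_half s hs]; positivity
  have hg_le : ∀ s : ℝ, 0 ≤ s → g s ≤ B := by
    intro s hs
    rw [hg_half s hs, hBdef]
    exact pow_le_pow_left₀ (norm_nonneg _) (hcontr _ (by linarith) F) 2
  have hg_anti : ∀ s u : ℝ, 0 ≤ s → s ≤ u → g u ≤ g s := by
    intro s u hs hsu
    rw [hg_half s hs, hg_half u (le_trans hs hsu)]
    have h1 : U (u / 2) F = U ((u - s) / 2) (U (s / 2) F) := by
      conv_lhs => rw [show u / 2 = (u - s) / 2 + s / 2 by ring]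
      exact hsemi _ _ (by linarith) (by linarith) F
    rw [h1]
    exact pow_le_pow_left₀ (norm_nonneg _) (hcontr _ (by linarith) _) 2
  have hUcont : ContinuousOn (fun τ => U τ F) (Ioi (0:ℝ)) := fun τ hτ =>
    ((hheat F τ hτ).continuousAt).continuousWithinAt
  have hgcont : ContinuousOn g (Ioi (0:ℝ)) :=
    (continuous_id.inner continuous_const).comp_continuousOn hUcont
  set gi : ℝ → ℝ := (Ioi (0:ℝ)).indicator g with hgidef
  have hgi_meas : Measurable gi := measurable_indicator_of_continuousOn isOpen_Ioi hgcont
  have hgi_eq : ∀ s : ℝ, 0 < s → gi s = g s := fun s hs => indicator_of_mem hs g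
  have hgi_bdd : ∀ s : ℝ, |gi s| ≤ B := by
    intro s
    by_cases hs : s ∈ Ioi (0:ℝ)
    · rw [hgidef, indicator_of_mem hs, abs_of_nonneg (hg_nonneg s (le_of_lt hs))]
      exact hg_le s (le_of_lt hs)
    · rw [hgidef, indicator_of_notMem hs]
      simpa using hB0
  -- measures
  set μ1 : Measure ℝ := volume.restrict (Ioi (0:ℝ)) with hμ1def
  set μ2 : Measure (ℝ × ℝ) := μ1.prod μ1 with hμ2def
  set ν : Measure ℝ := volume.restrict (Ioo (0:ℝ) B) with hνdef
  haveI hνfin : IsFiniteMeasure ν := by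
    constructor
    rw [hνdef, Measure.restrict_apply_univ, Real.volume_Ioo]
    exact ENNReal.ofReal_lt_top
  have hμ2r : μ2 = (volume.prod volume).restrict ((Ioi (0:ℝ)) ×ˢ (Ioi (0:ℝ))) := by
    rw [hμ2def, hμ1def, Measure.prod_restrict]
  have hae2 : ∀ᵐ p ∂μ2, 0 < p.1 ∧ 0 < p.2 := by
    rw [hμ2r]
    filter_upwards [ae_restrict_mem (measurableSet_Ioi.prod measurableSet_Ioi)] with p hp
    exact ⟨hp.1, hp.2⟩
  -- θ
  set θ : ℝ → ℝ → ℝ := fun s t => if t < gi s then (1:ℝ) else 0 with hθdef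
  have hθ_one : ∀ s t : ℝ, t < gi s → θ s t = 1 := fun s t h => if_pos h
  have hθ_zero : ∀ s t : ℝ, ¬ t < gi s → θ s t = 0 := fun s t h => if_neg h
  have hθmeas : Measurable (fun q : ℝ × ℝ => θ q.1 q.2) := by
    have hset : MeasurableSet {q : ℝ × ℝ | q.2 < gi q.1} :=
      measurableSet_lt measurable_snd (hgi_meas.comp measurable_fst)
    exact Measurable.ite hset measurable_const measurable_const
  have hθ_bd : ∀ s t, |θ s t| ≤ 1 := by
    intro s t
    by_cases h : t < gi s
    · rw [hθ_one s t h]; norm_num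
    · rw [hθ_zero s t h]; norm_num
  have hθ_nonneg : ∀ s t, 0 ≤ θ s t := by
    intro s t
    by_cases h : t < gi s
    · rw [hθ_one s t h]; norm_num
    · rw [hθ_zero s t h]
  clear_value θ
  -- layer cake
  have hlayer : ∀ s : ℝ, 0 < s → gi s = ∫ t, θ s t ∂ν := by
    intro s hs
    have hg0 : 0 ≤ gi s := by rw [hgi_eq s hs]; exact hg_nonneg s hs.le
    have hgB : gi s ≤ B := by rw [hgi_eq s hs]; exact hg_le s hs.le
    have h1 : (fun t => θ s t) = (Iio (gi s)).indicator (fun _ => (1:ℝ)) := by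
      funext t
      by_cases h : t < gi s
      · rw [hθ_one s t h, indicator_of_mem (mem_Iio.2 h)]
      · rw [hθ_zero s t h, indicator_of_notMem (fun hc => h (mem_Iio.1 hc))]
    rw [hνdef, h1, setIntegral_indicator measurableSet_Iio]
    have h2 : Ioo 0 B ∩ Iio (gi s) = Ioo 0 (gi s) := by
      ext t
      constructor
      · rintro ⟨⟨ht1, _⟩, ht3⟩; exact ⟨ht1, ht3⟩
      · rintro ⟨ht1, ht3⟩; exact ⟨⟨ht1, lt_of_lt_of_le ht3 hgB⟩, ht3⟩
    rw [h2, setIntegral_const, Real.volume_real_Ioo_of_le hg0, smul_eq_mul, mul_one, sub_zero]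
  -- the projections
  have hUF_meas : AEStronglyMeasurable (fun τ => U τ F) μ1 :=
    hUcont.aestronglyMeasurable measurableSet_Ioi
  have hPk_int : ∀ k, Integrable (fun τ => φ k τ • U τ F) μ1 := by
    intro k
    refine Integrable.mono' ((hφ_absint k).mul_const ‖F‖)
      (((hφ_cont k).aestronglyMeasurable).smul hUF_meas) ?_
    rw [hμ1def]
    filter_upwards [ae_restrict_mem measurableSet_Ioi] with τ hτ
    rw [norm_smul, Real.norm_eq_abs]
    exact mul_le_mul_of_nonneg_left (hcontr τ (le_of_lt hτ) F) (abs_nonneg _)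
  set Pk : ℤ → H := fun k => ∫ τ, φ k τ • U τ F ∂μ1 with hPkdef
  -- Q and Ψ
  set Q : ℤ → ℝ × ℝ → ℝ → ℝ := fun k p t => φ k p.1 * (φ k p.2 * θ (p.1 + p.2) t) with hQdef
  have hQ_eq : ∀ (k : ℤ) (p : ℝ × ℝ) (t : ℝ),
      Q k p t = φ k p.1 * (φ k p.2 * θ (p.1 + p.2) t) := fun _ _ _ => rfl
  clear_value Q
  set Ψ : ℤ → ℝ → ℝ := fun k t => ∫ p, Q k p t ∂μ2 with hΨdef
  have hΨ_eq : ∀ (k : ℤ) (t : ℝ), Ψ k t = ∫ p, Q k p t ∂μ2 := fun _ _ => rfl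
  clear_value Ψ
  have hφφ_int : ∀ k, Integrable (fun p : ℝ × ℝ => φ k p.1 * φ k p.2) μ2 :=
    fun k => (hφ_int k).mul_prod (hφ_int k)
  have hφφabs_int : ∀ k, Integrable (fun p : ℝ × ℝ => |φ k p.1| * |φ k p.2|) μ2 :=
    fun k => (hφ_absint k).mul_prod (hφ_absint k)
  have hφφ_zero : ∀ k, ∫ p, φ k p.1 * φ k p.2 ∂μ2 = 0 := by
    intro k
    rw [hμ2def, integral_prod_mul, hμ1def, hφ_zero k]
    ring
  have hQt_meas : ∀ (k : ℤ) (t : ℝ), Measurable (fun p : ℝ × ℝ => Q k p t) := by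
    intro k t
    simp only [hQ_eq]
    exact ((hφ_cont k).measurable.comp measurable_fst).mul
      (((hφ_cont k).measurable.comp measurable_snd).mul
        (hθmeas.comp ((measurable_fst.add measurable_snd).prodMk measurable_const)))
  have hQt_bd : ∀ (k : ℤ) (p : ℝ × ℝ) (t : ℝ), ‖Q k p t‖ ≤ |φ k p.1| * |φ k p.2| := by
    intro k p t
    rw [Real.norm_eq_abs, hQ_eq, abs_mul (φ k p.1), abs_mul (φ k p.2)]
    calc |φ k p.1| * (|φ k p.2| * |θ (p.1 + p.2) t|)
        ≤ |φ k p.1| * (|φ k p.2| * 1) :=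
          mul_le_mul_of_nonneg_left
            (mul_le_mul_of_nonneg_left (hθ_bd _ _) (abs_nonneg _)) (abs_nonneg _)
      _ = |φ k p.1| * |φ k p.2| := by ring
  have hQt_int : ∀ (k : ℤ) (t : ℝ), Integrable (fun p => Q k p t) μ2 := by
    intro k t
    refine Integrable.mono' (hφφabs_int k) (hQt_meas k t).aestronglyMeasurable ?_
    exact Filter.Eventually.of_forall (fun p => hQt_bd k p t)
  -- key identity
  have hkey : ∀ k : ℤ, ‖Pk k‖ ^ 2 = ∫ t, Ψ k t ∂ν ∧ Integrable (Ψ k) ν := by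
    intro k
    have e1 : ‖Pk k‖ ^ 2 = ∫ τ, φ k τ * ⟪Pk k, U τ F⟫ ∂μ1 := by
      calc ‖Pk k‖ ^ 2 = ⟪Pk k, Pk k⟫ := (real_inner_self_eq_norm_sq _).symm
        _ = ∫ τ, ⟪Pk k, φ k τ • U τ F⟫ ∂μ1 := (integral_inner (hPk_int k) (Pk k)).symm
        _ = ∫ τ, φ k τ * ⟪Pk k, U τ F⟫ ∂μ1 := by
            simp only [real_inner_smul_right]
    have e2 : ∀ τ : ℝ, ⟪Pk k, U τ F⟫ = ∫ σ, φ k σ * ⟪U τ F, U σ F⟫ ∂μ1 := by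
      intro τ
      calc ⟪Pk k, U τ F⟫ = ⟪U τ F, Pk k⟫ := real_inner_comm _ _
        _ = ∫ σ, ⟪U τ F, φ k σ • U σ F⟫ ∂μ1 := (integral_inner (hPk_int k) _).symm
        _ = ∫ σ, φ k σ * ⟪U τ F, U σ F⟫ ∂μ1 := by
            simp only [real_inner_smul_right]
    have e3 : ∀ σ τ : ℝ, 0 < σ → 0 < τ → ⟪U τ F, U σ F⟫ = gi (τ + σ) := by
      intro σ τ hσ hτ
      rw [hgi_eq _ (add_pos hτ hσ)]
      calc ⟪U τ F, U σ F⟫ = ⟪U σ (U τ F), F⟫ := (hselfadj σ hσ.le (U τ F) F).symm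
        _ = ⟪U (σ + τ) F, F⟫ := by rw [hsemi σ τ hσ.le hτ.le F]
        _ = g (τ + σ) := by rw [add_comm]
    have e4 : ‖Pk k‖ ^ 2 = ∫ τ, ∫ σ, φ k τ * (φ k σ * gi (τ + σ)) ∂μ1 ∂μ1 := by
      rw [e1]
      refine integral_congr_ae ?_
      have hae1 : ∀ᵐ τ ∂μ1, 0 < τ := by
        rw [hμ1def]
        filter_upwards [ae_restrict_mem measurableSet_Ioi] with τ hτ using hτ
      filter_upwards [hae1] with τ hτ
      rw [e2 τ, ← integral_const_mul]
      refine integral_congr_ae ?_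
      have hae1' : ∀ᵐ σ ∂μ1, 0 < σ := by
        rw [hμ1def]
        filter_upwards [ae_restrict_mem measurableSet_Ioi] with σ hσ using hσ
      filter_upwards [hae1'] with σ hσ
      rw [e3 σ τ hσ hτ]
    have hq_meas : AEStronglyMeasurable
        (fun p : ℝ × ℝ => φ k p.1 * (φ k p.2 * gi (p.1 + p.2))) μ2 := by
      apply Measurable.aestronglyMeasurable
      exact ((hφ_cont k).measurable.comp measurable_fst).mul
        (((hφ_cont k).measurable.comp measurable_snd).mul
          (hgi_meas.comp (measurable_fst.add measurable_snd)))
    have hq_int : Integrable (fun p : ℝ × ℝ => φ k p.1 * (φ k p.2 * gi (p.1 + p.2))) μ2 := by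
      refine Integrable.mono' ((hφ_absint k).mul_prod ((hφ_absint k).mul_const B))
        hq_meas ?_
      refine Filter.Eventually.of_forall (fun p => ?_)
      rw [Real.norm_eq_abs, abs_mul (φ k p.1), abs_mul (φ k p.2)]
      exact mul_le_mul_of_nonneg_left
        (mul_le_mul_of_nonneg_left (hgi_bdd _) (abs_nonneg _)) (abs_nonneg _)
    have e5 : ‖Pk k‖ ^ 2 = ∫ p, φ k p.1 * (φ k p.2 * gi (p.1 + p.2)) ∂μ2 := by
      rw [e4, hμ2def]
      exact integral_integral hq_int
    have e6 : ∫ p, φ k p.1 * (φ k p.2 * gi (p.1 + p.2)) ∂μ2 = ∫ p, ∫ t, Q k p t ∂ν ∂μ2 := by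
      refine integral_congr_ae ?_
      filter_upwards [hae2] with p hp
      rw [hlayer _ (add_pos hp.1 hp.2)]
      simp only [hQ_eq]
      rw [integral_const_mul, integral_const_mul]
    have hQ_int : Integrable (fun z : (ℝ × ℝ) × ℝ => Q k z.1 z.2) (μ2.prod ν) := by
      have hQ_meas : Measurable (fun z : (ℝ × ℝ) × ℝ => Q k z.1 z.2) := by
        simp only [hQ_eq]
        exact ((hφ_cont k).measurable.comp (measurable_fst.comp measurable_fst)).mul
          (((hφ_cont k).measurable.comp (measurable_snd.comp measurable_fst)).mul
            (hθmeas.comp (((measurable_fst.comp measurable_fst).add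
              (measurable_snd.comp measurable_fst)).prodMk measurable_snd)))
      refine Integrable.mono'
        (Integrable.mul_prod (μ := μ2) (ν := ν) (hφφabs_int k) (integrable_const 1))
        hQ_meas.aestronglyMeasurable ?_
      refine Filter.Eventually.of_forall (fun z => ?_)
      calc ‖Q k z.1 z.2‖ ≤ |φ k z.1.1| * |φ k z.1.2| := hQt_bd k z.1 z.2
        _ = |φ k z.1.1| * |φ k z.1.2| * 1 := by ring
    have e7 : ∫ p, ∫ t, Q k p t ∂ν ∂μ2 = ∫ t, Ψ k t ∂ν := by
      simp only [hΨ_eq]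
      exact integral_integral_swap hQ_int
    refine ⟨e5.trans (e6.trans e7), ?_⟩
    have h9 := hQ_int.swap.integral_prod_left
    have hfun : Ψ k = fun t => ∫ p, Q k p t ∂μ2 := funext (fun t => hΨ_eq k t)
    rw [hfun]
    exact h9
  -- uniform bound on finite sums of |Ψ k t|
  have hΨ_sum_bdd : ∀ (t : ℝ) (sfin : Finset ℤ), ∑ k ∈ sfin, |Ψ k t| ≤ 3 * K := by
    intro t sfin
    by_cases hcase : ∃ s0 : ℝ, 0 < s0 ∧ g s0 ≤ t
    case neg =>
      push_neg at hcase
      have hΨ0 : ∀ k, Ψ k t = 0 := by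
        intro k
        have hcongr : ∀ᵐ p ∂μ2, Q k p t = φ k p.1 * φ k p.2 := by
          filter_upwards [hae2] with p hp
          have hlt : t < gi (p.1 + p.2) := by
            rw [hgi_eq _ (add_pos hp.1 hp.2)]
            exact hcase _ (add_pos hp.1 hp.2)
          rw [hQ_eq, hθ_one _ _ hlt]
          ring
        rw [hΨ_eq, integral_congr_ae hcongr, hφφ_zero k]
      rw [Finset.sum_congr rfl (fun k _ => by rw [hΨ0 k, abs_zero])]
      rw [Finset.sum_const, smul_zero]
      linarith
    case pos =>
      set D : Set ℝ := {s | 0 < s ∧ g s ≤ t} with hDdef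
      have hDne : D.Nonempty := hcase
      have hbdd : BddBelow D := ⟨0, fun x hx => hx.1.le⟩
      set a : ℝ := sInf D with hadef
      have ha0 : 0 ≤ a := le_csInf hDne (fun x hx => hx.1.le)
      have hDa : ∀ x ∈ D, a ≤ x := fun x hx => csInf_le hbdd hx
      have hEa : ∀ x : ℝ, 0 < x → t < g x → x ≤ a := by
        intro x hx hgx
        by_contra hax
        push_neg at hax
        obtain ⟨d, hd, hdx⟩ := exists_lt_of_csInf_lt hDne hax
        exact absurd (le_trans (hg_anti d x hd.1.le hdx.le) hd.2) (not_le.2 hgx)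
      -- bound (i)
      have hb1 : ∀ k, |Ψ k t| ≤ C₀ ^ 2 * (c k * a) ^ 2 := by
        intro k
        have hle : |Ψ k t| ≤ ∫ p, ‖Q k p t‖ ∂μ2 := by
          rw [← Real.norm_eq_abs, hΨ_eq]
          exact norm_integral_le_integral_norm _
        have hIi : Integrable (fun p : ℝ × ℝ =>
            ((Iio a).indicator (fun σ => |φ k σ|) p.1) *
            ((Iio a).indicator (fun σ => |φ k σ|) p.2)) μ2 :=
          ((hφ_absint k).indicator measurableSet_Iio).mul_prod
            ((hφ_absint k).indicator measurableSet_Iio)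
        have hmono : ∫ p, ‖Q k p t‖ ∂μ2 ≤ ∫ p,
            ((Iio a).indicator (fun σ => |φ k σ|) p.1) *
            ((Iio a).indicator (fun σ => |φ k σ|) p.2) ∂μ2 := by
          refine integral_mono_ae (hQt_int k t).norm hIi ?_
          filter_upwards [hae2] with p hp
          by_cases hθc : t < gi (p.1 + p.2)
          · have hsum : p.1 + p.2 ≤ a := by
              refine hEa _ (add_pos hp.1 hp.2) ?_
              rwa [hgi_eq _ (add_pos hp.1 hp.2)] at hθc
            have h1 : p.1 ∈ Iio a := by
              simp only [mem_Iio]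
              linarith [hp.2]
            have h2 : p.2 ∈ Iio a := by
              simp only [mem_Iio]
              linarith [hp.1]
            rw [indicator_of_mem h1, indicator_of_mem h2]
            exact hQt_bd k p t
          · have hz : Q k p t = 0 := by
              rw [hQ_eq, hθ_zero _ _ hθc]
              ring
            rw [hz, norm_zero]
            exact mul_nonneg (indicator_nonneg (fun x _ => abs_nonneg _) _)
              (indicator_nonneg (fun x _ => abs_nonneg _) _)
        have hval : ∫ p, ((Iio a).indicator (fun σ => |φ k σ|) p.1) *
            ((Iio a).indicator (fun σ => |φ k σ|) p.2) ∂μ2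
            = (∫ τ in Ioo 0 a, |φ k τ|) * (∫ τ in Ioo 0 a, |φ k τ|) := by
          rw [hμ2def, integral_prod_mul, hμ1def]
          rw [setIntegral_indicator measurableSet_Iio, Ioi_inter_Iio]
        have hIoo : ∫ τ in Ioo 0 a, |φ k τ| ≤ c k * C₀ * a := by
          have hnorm : ‖∫ τ in Ioo 0 a, |φ k τ|‖ ≤ c k * C₀ * (volume (Ioo 0 a)).toReal := by
            refine norm_setIntegral_le_of_norm_le_const ?_ ?_
            · rw [Real.volume_Ioo]; exact ENNReal.ofReal_lt_top
            · intro x hx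
              rw [Real.norm_eq_abs, abs_abs]
              exact hφ_bdd k x hx.1.le
          rw [Real.norm_eq_abs] at hnorm
          calc ∫ τ in Ioo 0 a, |φ k τ| ≤ abs (∫ τ in Ioo 0 a, |φ k τ|) := le_abs_self _
            _ ≤ c k * C₀ * (volume (Ioo 0 a)).toReal := hnorm
            _ = c k * C₀ * a := by rw [Real.volume_Ioo, sub_zero, ENNReal.toReal_ofReal ha0]
        have hInn : (0:ℝ) ≤ ∫ τ in Ioo 0 a, |φ k τ| :=
          setIntegral_nonneg measurableSet_Ioo (fun τ _ => abs_nonneg _)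
        calc |Ψ k t| ≤ ∫ p, ‖Q k p t‖ ∂μ2 := hle
          _ ≤ _ := hmono
          _ = (∫ τ in Ioo 0 a, |φ k τ|) * (∫ τ in Ioo 0 a, |φ k τ|) := hval
          _ ≤ (c k * C₀ * a) * (c k * C₀ * a) :=
            mul_le_mul hIoo hIoo hInn
              (mul_nonneg (mul_nonneg (hc_pos k).le hC₀0) ha0)
          _ = C₀ ^ 2 * (c k * a) ^ 2 := by ring
      -- bound (ii)
      have hb2 : 0 < a → ∀ k, |Ψ k t| ≤ 8 * A * C₂ * (c k * a)⁻¹ := by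
        intro hapos k
        have ha4 : 0 < a / 4 := by linarith
        have hdiff : Ψ k t = ∫ p, (Q k p t - φ k p.1 * φ k p.2) ∂μ2 := by
          rw [integral_sub (hQt_int k t) (hφφ_int k), hφφ_zero k, sub_zero, hΨ_eq]
        have hindint : Integrable
            ((Ioi (a/4)).indicator (fun σ => |φ k σ|)) μ1 :=
          (hφ_absint k).indicator measurableSet_Ioi
        have hbndint : Integrable (fun p : ℝ × ℝ =>
            ((Ioi (a/4)).indicator (fun σ => |φ k σ|) p.1) * |φ k p.2|
            + |φ k p.1| * ((Ioi (a/4)).indicator (fun σ => |φ k σ|) p.2)) μ2 :=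
          (hindint.mul_prod (hφ_absint k)).add ((hφ_absint k).mul_prod hindint)
        have hmono : |Ψ k t| ≤ ∫ p,
            (((Ioi (a/4)).indicator (fun σ => |φ k σ|) p.1) * |φ k p.2|
            + |φ k p.1| * ((Ioi (a/4)).indicator (fun σ => |φ k σ|) p.2)) ∂μ2 := by
          rw [hdiff, ← Real.norm_eq_abs]
          refine (norm_integral_le_integral_norm _).trans ?_
          refine integral_mono_ae ((hQt_int k t).sub (hφφ_int k)).norm hbndint ?_
          filter_upwards [hae2] with p hp
          by_cases hθc : t < gi (p.1 + p.2)
          · have hz : Q k p t - φ k p.1 * φ k p.2 = 0 := by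
              rw [hQ_eq, hθ_one _ _ hθc]
              ring
            rw [hz, norm_zero]
            have h1 : 0 ≤ (Ioi (a/4)).indicator (fun σ => |φ k σ|) p.1 :=
              indicator_nonneg (fun x _ => abs_nonneg _) _
            have h2 : 0 ≤ (Ioi (a/4)).indicator (fun σ => |φ k σ|) p.2 :=
              indicator_nonneg (fun x _ => abs_nonneg _) _
            exact add_nonneg (mul_nonneg h1 (abs_nonneg _)) (mul_nonneg (abs_nonneg _) h2)
          · have hz : Q k p t - φ k p.1 * φ k p.2 = -(φ k p.1 * φ k p.2) := by
              rw [hQ_eq, hθ_zero _ _ hθc]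
              ring
            rw [hz, norm_neg, Real.norm_eq_abs, abs_mul (φ k p.1)]
            have hD2 : p.1 + p.2 ∈ D := by
              refine ⟨add_pos hp.1 hp.2, ?_⟩
              rw [hgi_eq _ (add_pos hp.1 hp.2)] at hθc
              exact le_of_not_gt hθc
            have hsum : a ≤ p.1 + p.2 := hDa _ hD2
            have hcases : a / 4 < p.1 ∨ a / 4 < p.2 := by
              by_contra hcon
              push_neg at hcon
              have h1 := hcon.1
              have h2 := hcon.2
              linarith
            rcases hcases with hc1 | hc1
            · have h1 : (Ioi (a/4)).indicator (fun σ => |φ k σ|) p.1 = |φ k p.1| :=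
                indicator_of_mem hc1 _
              rw [h1]
              have h2 : 0 ≤ |φ k p.1| * ((Ioi (a/4)).indicator (fun σ => |φ k σ|) p.2) :=
                mul_nonneg (abs_nonneg _) (indicator_nonneg (fun x _ => abs_nonneg _) _)
              linarith
            · have h1 : (Ioi (a/4)).indicator (fun σ => |φ k σ|) p.2 = |φ k p.2| :=
                indicator_of_mem hc1 _
              rw [h1]
              have h2 : 0 ≤ ((Ioi (a/4)).indicator (fun σ => |φ k σ|) p.1) * |φ k p.2| :=
                mul_nonneg (indicator_nonneg (fun x _ => abs_nonneg _) _) (abs_nonneg _)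
              linarith
        have hJ : ∫ τ, (Ioi (a/4)).indicator (fun σ => |φ k σ|) τ ∂μ1 ≤ 4 * C₂ / (c k * a) := by
          rw [hμ1def, setIntegral_indicator measurableSet_Ioi, Ioi_inter_Ioi,
            max_eq_right ha4.le]
          calc ∫ τ in Ioi (a/4), |φ k τ| ≤ C₂ / (c k * (a/4)) := hφ_tail k _ ha4
            _ = 4 * C₂ / (c k * a) := by
              rw [div_eq_div_iff (mul_pos (hc_pos k) ha4).ne' (mul_pos (hc_pos k) hapos).ne']
              ring
        have hJ0 : 0 ≤ ∫ τ, (Ioi (a/4)).indicator (fun σ => |φ k σ|) τ ∂μ1 :=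
          integral_nonneg (fun τ => indicator_nonneg (fun x _ => abs_nonneg _) _)
        have hsplit : ∫ p, (((Ioi (a/4)).indicator (fun σ => |φ k σ|) p.1) * |φ k p.2|
            + |φ k p.1| * ((Ioi (a/4)).indicator (fun σ => |φ k σ|) p.2)) ∂μ2
            = (∫ τ, (Ioi (a/4)).indicator (fun σ => |φ k σ|) τ ∂μ1) * A
            + A * (∫ τ, (Ioi (a/4)).indicator (fun σ => |φ k σ|) τ ∂μ1) := by
          have hpm1 : ∫ p : ℝ × ℝ, ((Ioi (a/4)).indicator (fun σ => |φ k σ|) p.1) * |φ k p.2|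
              ∂(μ1.prod μ1)
              = (∫ τ, (Ioi (a/4)).indicator (fun σ => |φ k σ|) τ ∂μ1) * (∫ τ, |φ k τ| ∂μ1) :=
            integral_prod_mul ((Ioi (a/4)).indicator (fun σ => |φ k σ|)) (fun τ => |φ k τ|)
          have hpm2 : ∫ p : ℝ × ℝ, |φ k p.1| * ((Ioi (a/4)).indicator (fun σ => |φ k σ|) p.2)
              ∂(μ1.prod μ1)
              = (∫ τ, |φ k τ| ∂μ1) * (∫ τ, (Ioi (a/4)).indicator (fun σ => |φ k σ|) τ ∂μ1) :=
            integral_prod_mul (fun τ => |φ k τ|) ((Ioi (a/4)).indicator (fun σ => |φ k σ|))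
          rw [integral_add (μ := μ2) (hindint.mul_prod (hφ_absint k))
            ((hφ_absint k).mul_prod hindint), hμ2def, hpm1, hpm2]
          have hAμ : ∫ τ, |φ k τ| ∂μ1 = A := by rw [hμ1def]; exact hφ_A k
          rw [hAμ]
        calc |Ψ k t| ≤ _ := hmono
          _ = (∫ τ, (Ioi (a/4)).indicator (fun σ => |φ k σ|) τ ∂μ1) * A
              + A * (∫ τ, (Ioi (a/4)).indicator (fun σ => |φ k σ|) τ ∂μ1) := hsplit
          _ ≤ (4 * C₂ / (c k * a)) * A + A * (4 * C₂ / (c k * a)) :=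
            add_le_add (mul_le_mul_of_nonneg_right hJ hA0) (mul_le_mul_of_nonneg_left hJ hA0)
          _ = 8 * A * C₂ * (c k * a)⁻¹ := by
            rw [div_eq_mul_inv]
            ring
      -- combine into min bound
      have hmin : ∀ k, |Ψ k t| ≤ K * min ((c k * a) ^ 2) ((c k * a)⁻¹) := by
        intro k
        rcases ha0.eq_or_lt with h0 | h0
        · have h := hb1 k
          rw [← h0] at h ⊢
          simp only [mul_zero] at h ⊢
          rw [inv_zero]
          simpa using h
        · rcases le_total ((c k * a) ^ 2) ((c k * a)⁻¹) with hmm | hmm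
          · rw [min_eq_left hmm]
            refine (hb1 k).trans ?_
            exact mul_le_mul_of_nonneg_right hKC₀ (sq_nonneg _)
          · rw [min_eq_right hmm]
            refine (hb2 h0 k).trans ?_
            refine mul_le_mul_of_nonneg_right hKAC ?_
            exact inv_nonneg.2 (mul_nonneg (hc_pos k).le ha0)
      calc ∑ k ∈ sfin, |Ψ k t|
          ≤ ∑ k ∈ sfin, K * min ((c k * a) ^ 2) ((c k * a)⁻¹) :=
            Finset.sum_le_sum (fun k _ => hmin k)
        _ = K * ∑ k ∈ sfin, min (((4:ℝ) ^ k * a) ^ 2) (((4:ℝ) ^ k * a)⁻¹) := by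
            rw [Finset.mul_sum]
            refine Finset.sum_congr rfl (fun k _ => ?_)
            rw [hc4 k]
        _ ≤ K * 3 := mul_le_mul_of_nonneg_left (sum_min_le_three _ _ ha0) hK0.le
        _ = 3 * K := mul_comm _ _
  -- finite sums
  have hsum_le : ∀ sfin : Finset ℤ, ∑ k ∈ sfin, ‖Pk k‖ ^ 2 ≤ 3 * K * B := by
    intro sfin
    have h1 : ∑ k ∈ sfin, ‖Pk k‖ ^ 2 = ∫ t, (∑ k ∈ sfin, Ψ k t) ∂ν := by
      rw [Finset.sum_congr rfl (fun k _ => (hkey k).1)]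
      exact (integral_finset_sum sfin (fun k _ => (hkey k).2)).symm
    rw [h1]
    calc ∫ t, (∑ k ∈ sfin, Ψ k t) ∂ν ≤ ∫ _, (3 * K : ℝ) ∂ν := by
            refine integral_mono_ae (integrable_finset_sum _ (fun k _ => (hkey k).2))
              (integrable_const _) ?_
            refine Filter.Eventually.of_forall (fun t => ?_)
            calc ∑ k ∈ sfin, Ψ k t ≤ ∑ k ∈ sfin, |Ψ k t| :=
                Finset.sum_le_sum (fun k _ => le_abs_self _)
              _ ≤ 3 * K := hΨ_sum_bdd t sfin
      _ = 3 * K * B := by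
        rw [integral_const, hνdef, measureReal_restrict_apply_univ, Real.volume_real_Ioo_of_le hB0,
          sub_zero, smul_eq_mul, mul_comm]
  -- conclude
  have hfinal := tsum_le_of_sum_le' (L := SummationFilter.unconditional ℤ) (mul_nonneg (by linarith) hB0) hsum_le
  exact hfinal
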